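/- Let d ≥ 1 and n ≥ 1 with dn even, and let P be a perfect matching chosen uniformly at random on a set of dn points partitioned into n buckets of d points each. Let s, e be integers with 0 ≤ s ≤ n, 0 ≤ 2e ≤ ds and ds − 2e ≤ d(n−s). Then the expected number of sets S of s buckets such that exactly e pairs of P have both of their points in buckets of S equals C(n,s) · C(ds, 2e) · C(d(n−s), ds−2e) · (ds−2e)! · M(2e) · M(d(n−s) − (ds−2e)) / M(dn), where M(2i) = (2i)! / (i! · 2^i) is the number of perfect matchings of 2i points and C(a,b) denotes the binomial coefficient. -/

import Mathlib

open Finset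

noncomputable section

/-- `M(k) = k!/((k/2)!·2^{k/2})`, the number of perfect matchings of `k` points
(for `k` even), as a real number. -/
noncomputable def Mpair (k : ℕ) : ℝ :=
  (Nat.factorial k : ℝ) / ((Nat.factorial (k / 2) : ℝ) * 2 ^ (k / 2))

/-- The pairings of `d·n` points (grouped into `n` buckets of `d` consecutive points:
point `x` lies in bucket `x/d`): permutations that are involutions without fixed
points, i.e. perfect matchings. -/
def pairings (d n : ℕ) : Finset (Equiv.Perm (Fin (d * n))) :=
  Finset.univ.filter (fun P => ∀ x, P x ≠ x ∧ P (P x) = x)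

/-- The number of sets `S` of exactly `s` buckets such that exactly `e` pairs of the
pairing `P` have both of their points in buckets of `S` (counted via the `2e`
points covered by such pairs). -/
def goodSets (d n s e : ℕ) (P : Equiv.Perm (Fin (d * n))) : ℕ :=
  (((Finset.range n).powersetCard s).filter
    (fun S => (Finset.univ.filter
      (fun x : Fin (d * n) => (x : ℕ) / d ∈ S ∧ ((P x : ℕ)) / d ∈ S)).card = 2 * e)).card

/-!
Let `A` be a subset of a finite ground set, with `#A = 2e + c` and `c + 2f` points outside `A`.
Conditioning on the partner `y` of a fixed `x ∈ A` and deleting the pair `{x, y}` gives a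
recursion for the number of pairings with exactly `e` pairs inside `A` (the pair `{x, y}` is
inside `A` exactly when `y ∈ A`); it is solved by `(2e+c)! (c+2f)! / (c! e! f! 2^(e+f))`.
A set of `s` buckets covers `ds` points, so double counting over the `C(n, s)` sets of buckets
and dividing by the number `M(dn)` of all pairings gives the expectation.
-/

open Equiv
open scoped Nat

section Matchings

variable {α : Type*} [DecidableEq α]

def insidePoints (P : Perm α) (A : Finset α) : Finset α := {z ∈ A | P z ∈ A}

theorem card_insidePoints_swap_mul {Q : Perm α} {A : Finset α} {x y : α} (hQx : Q x = x)
    (hQy : Q y = y) (hx : x ∈ A) (hxy : x ≠ y) :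
    #(insidePoints (swap x y * Q) A) =
      #(insidePoints Q ((A.erase x).erase y)) + if y ∈ A then 2 else 0 := by
  have hQ : ∀ z, (Q z = x ↔ z = x) ∧ (Q z = y ↔ z = y) := fun _ =>
    ⟨Q.injective.eq_iff' hQx, Q.injective.eq_iff' hQy⟩
  split_ifs with hy
  · have : insidePoints (swap x y * Q) A =
        insert x (insert y (insidePoints Q ((A.erase x).erase y))) := by
      ext z
      simp only [insidePoints, mem_filter, mem_insert, mem_erase, Perm.mul_apply, swap_apply_def]
      grind
    rw [this, card_insert_of_notMem, card_insert_of_notMem] <;> simp [insidePoints, hxy]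
  · have : insidePoints (swap x y * Q) A = insidePoints Q ((A.erase x).erase y) := by
      ext z
      simp only [insidePoints, mem_filter, mem_erase, Perm.mul_apply, swap_apply_def]
      grind
    rw [this, add_zero]

variable [Fintype α]

def matchingsOn (s : Finset α) : Finset (Perm α) :=
  {P | ∀ z, (P z ≠ z ↔ z ∈ s) ∧ P (P z) = z}

theorem mem_matchingsOn {s : Finset α} {P : Perm α} :
    P ∈ matchingsOn s ↔ ∀ z, (P z ≠ z ↔ z ∈ s) ∧ P (P z) = z := by
  simp [matchingsOn]

theorem apply_eq_self_of_mem_matchingsOn {s : Finset α} {P : Perm α} (hP : P ∈ matchingsOn s)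
    {z : α} (hz : z ∉ s) : P z = z :=
  not_not.1 (mt (mem_matchingsOn.1 hP z).1.1 hz)

theorem apply_mem_of_mem_matchingsOn {s : Finset α} {P : Perm α} (hP : P ∈ matchingsOn s)
    {z : α} (hz : z ∈ s) : P z ∈ s := by
  have hP := mem_matchingsOn.1 hP
  exact (hP (P z)).1.1 (by rw [(hP z).2]; exact Ne.symm ((hP z).1.2 hz))

theorem matchingsOn_empty : matchingsOn (∅ : Finset α) = {1} := by
  ext P
  simp only [mem_matchingsOn, notMem_empty, iff_false, not_not, mem_singleton, Perm.ext_iff,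
    Perm.one_apply]
  grind

theorem insidePoints_self {s : Finset α} {P : Perm α} (hP : P ∈ matchingsOn s) :
    insidePoints P s = s :=
  filter_true_of_mem fun _ hz => apply_mem_of_mem_matchingsOn hP hz

theorem swap_mul_mem_matchingsOn_iff {s : Finset α} {x y : α} (hx : x ∈ s) (hy : y ∈ s)
    (hxy : x ≠ y) {P : Perm α} :
    swap x y * P ∈ matchingsOn ((s.erase x).erase y) ↔ P ∈ matchingsOn s ∧ P x = y := by
  -- both sides force `{x, y}` to be invariant, and off `{x, y}` the two permutations agree
  simp only [mem_matchingsOn, Perm.mul_apply, mem_erase, swap_apply_def]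
  grind

theorem card_filter_matchingsOn_eq_sum {s : Finset α} {x : α} (hx : x ∈ s)
    (p : Perm α → Prop) [DecidablePred p] :
    #{P ∈ matchingsOn s | p P} =
      ∑ y ∈ s.erase x, #{Q ∈ matchingsOn ((s.erase x).erase y) | p (swap x y * Q)} := by
  rw [card_eq_sum_card_fiberwise (f := fun P => P x) (t := s.erase x) fun P hP =>
    have hP := (mem_filter.1 hP).1
    mem_erase.2 ⟨(mem_matchingsOn.1 hP x).1.2 hx, apply_mem_of_mem_matchingsOn hP hx⟩]
  refine sum_congr rfl fun y hy => ?_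
  obtain ⟨hyx, hys⟩ := mem_erase.1 hy
  have hswap := fun P => swap_mul_mem_matchingsOn_iff hx hys (Ne.symm hyx) (P := P)
  refine card_nbij' (swap x y * ·) (swap x y * ·) (fun P hP => ?_) (fun Q hQ => ?_)
    (fun P _ => swap_mul_self_mul x y P) (fun Q _ => swap_mul_self_mul x y Q)
  · simp only [mem_coe, mem_filter, hswap, swap_mul_self_mul] at hP ⊢
    tauto
  · have := (hswap (swap x y * Q)).1
    simp only [mem_coe, mem_filter, swap_mul_self_mul] at hQ ⊢ this
    tauto

theorem card_filter_insidePoints_eq_sum {s A : Finset α} {x : α} (hA : A ⊆ s) (hx : x ∈ A)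
    (k : ℕ) :
    #{P ∈ matchingsOn s | #(insidePoints P A) = k} =
      ∑ y ∈ A.erase x, #{Q ∈ matchingsOn ((s.erase x).erase y) |
          #(insidePoints Q ((A.erase x).erase y)) + 2 = k} +
      ∑ y ∈ s \ A, #{Q ∈ matchingsOn ((s.erase x).erase y) |
          #(insidePoints Q ((A.erase x).erase y)) = k} := by
  have hswap : ∀ y, x ≠ y → ∀ Q ∈ matchingsOn ((s.erase x).erase y),
      #(insidePoints (swap x y * Q) A) =
        #(insidePoints Q ((A.erase x).erase y)) + if y ∈ A then 2 else 0 := fun y hxy Q hQ =>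
    card_insidePoints_swap_mul (apply_eq_self_of_mem_matchingsOn hQ (by simp))
      (apply_eq_self_of_mem_matchingsOn hQ (by simp)) hx hxy
  have hin : {y ∈ s.erase x | y ∈ A} = A.erase x := by
    ext y; simp only [mem_filter, mem_erase]; grind
  have hout : {y ∈ s.erase x | y ∉ A} = s \ A := by
    ext y; simp only [mem_filter, mem_erase, mem_sdiff]; grind
  rw [card_filter_matchingsOn_eq_sum (hA hx), ← sum_filter_add_sum_filter_not _ (· ∈ A), hin, hout]
  congr 1 <;> refine sum_congr rfl fun y hy => congrArg card (filter_congr fun Q hQ => ?_)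
  · rw [hswap y (Ne.symm (mem_erase.1 hy).1) Q hQ, if_pos (mem_erase.1 hy).2]
  · rw [hswap y (fun h => (mem_sdiff.1 hy).2 (h ▸ hx)) Q hQ, if_neg (mem_sdiff.1 hy).2, add_zero]

/-- The closed form counts the choice of the `2e` points of `A` paired inside `A`, their
pairing, an injection of the other `c` points of `A` into `s \ A`, and a pairing of the `2f`
points left over: `C(2e+c, 2e) · M(2e) · (c+2f)!/(2f)! · M(2f)`. -/
def MatchingCountFormula (s : Finset α) : Prop :=
  ∀ ⦃A : Finset α⦄ ⦃e c f : ℕ⦄, A ⊆ s → #A = 2 * e + c → #s = 2 * e + 2 * c + 2 * f →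
    #{P ∈ matchingsOn s | #(insidePoints P A) = 2 * e} * (c ! * e ! * f ! * 2 ^ (e + f)) =
      (2 * e + c)! * (c + 2 * f)!

theorem sum_card_partner_mem_mul {s A : Finset α} {x : α} {e c f : ℕ}
    (ih : ∀ t ⊂ s, MatchingCountFormula t) (hx : x ∈ A) (hA : A ⊆ s)
    (hAcard : #A = 2 * e + c) (hs : #s = 2 * e + 2 * c + 2 * f) :
    (∑ y ∈ A.erase x, #{Q ∈ matchingsOn ((s.erase x).erase y) |
        #(insidePoints Q ((A.erase x).erase y)) + 2 = 2 * e}) * (c ! * e ! * f ! * 2 ^ (e + f)) =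
      2 * e * ((2 * e + c - 1)! * (c + 2 * f)!) := by
  rcases e with _ | e
  · simp
  rw [sum_mul, sum_const_nat (m := 2 * (e + 1) * ((2 * e + c)! * (c + 2 * f)!)),
    card_erase_of_mem hx, hAcard, show 2 * (e + 1) + c - 1 = 2 * e + c + 1 by omega,
    Nat.factorial_succ]
  · ring
  intro y hy
  have hys : y ∈ s.erase x := erase_subset_erase x hA hy
  have hIH := ih _ ((erase_subset y _).trans_ssubset (erase_ssubset (hA hx)))
    (erase_subset_erase y (erase_subset_erase x hA)) (e := e) (c := c) (f := f)
    (by rw [card_erase_of_mem hy, card_erase_of_mem hx]; omega)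
    (by rw [card_erase_of_mem hys, card_erase_of_mem (hA hx)]; omega)
  simp only [show ∀ k, k + 2 = 2 * (e + 1) ↔ k = 2 * e by omega]
  rw [Nat.factorial_succ, ← hIH]
  ring

theorem sum_card_partner_notMem_mul {s A : Finset α} {x : α} {e c f : ℕ}
    (ih : ∀ t ⊂ s, MatchingCountFormula t) (hx : x ∈ A) (hA : A ⊆ s)
    (hAcard : #A = 2 * e + c) (hs : #s = 2 * e + 2 * c + 2 * f) :
    (∑ y ∈ s \ A, #{Q ∈ matchingsOn ((s.erase x).erase y) |
        #(insidePoints Q ((A.erase x).erase y)) = 2 * e}) * (c ! * e ! * f ! * 2 ^ (e + f)) =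
      c * ((2 * e + c - 1)! * (c + 2 * f)!) := by
  rcases c with _ | c
  · have hzero : ∀ y ∈ s \ A, #{Q ∈ matchingsOn ((s.erase x).erase y) |
        #(insidePoints Q ((A.erase x).erase y)) = 2 * e} = 0 := by
      intro y _
      refine card_eq_zero.2 (filter_eq_empty_iff.2 fun Q _ hQ => ?_)
      have h₁ := card_le_card (filter_subset (Q · ∈ (A.erase x).erase y) ((A.erase x).erase y))
      have h₂ := card_le_card (erase_subset y (A.erase x))
      have h₃ := card_pos.2 ⟨x, hx⟩
      rw [card_erase_of_mem hx] at h₂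
      simp only [insidePoints] at hQ
      omega
    rw [sum_eq_zero hzero, zero_mul, zero_mul]
  rw [sum_mul, sum_const_nat (m := (c + 1) * ((2 * e + c)! * (c + 2 * f)!)),
    card_sdiff_of_subset hA, show #s - #A = c + 2 * f + 1 by omega,
    show 2 * e + (c + 1) - 1 = 2 * e + c by omega, show c + 1 + 2 * f = c + 2 * f + 1 by ring,
    Nat.factorial_succ (c + 2 * f)]
  · ring
  intro y hy
  obtain ⟨hys, hyA⟩ := mem_sdiff.1 hy
  have hxy : x ≠ y := fun h => hyA (h ▸ hx)
  have hIH := ih _ ((erase_subset y _).trans_ssubset (erase_ssubset (hA hx)))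
    (erase_subset_erase y (erase_subset_erase x hA)) (e := e) (c := c) (f := f)
    (by rw [erase_eq_of_notMem fun h => hyA (mem_of_mem_erase h), card_erase_of_mem hx]; omega)
    (by rw [card_erase_of_mem (mem_erase.2 ⟨hxy.symm, hys⟩), card_erase_of_mem (hA hx)]; omega)
  rw [Nat.factorial_succ, ← hIH]
  ring

theorem card_filter_insidePoints_mul_of_mem {s A : Finset α} {x : α} {e c f : ℕ}
    (ih : ∀ t ⊂ s, MatchingCountFormula t) (hx : x ∈ A) (hA : A ⊆ s)
    (hAcard : #A = 2 * e + c) (hs : #s = 2 * e + 2 * c + 2 * f) :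
    #{P ∈ matchingsOn s | #(insidePoints P A) = 2 * e} * (c ! * e ! * f ! * 2 ^ (e + f)) =
      (2 * e + c)! * (c + 2 * f)! := by
  have hpos : 2 * e + c ≠ 0 := by rw [← hAcard]; exact (card_pos.2 ⟨x, hx⟩).ne'
  rw [card_filter_insidePoints_eq_sum hA hx, add_mul, sum_card_partner_mem_mul ih hx hA hAcard hs,
    sum_card_partner_notMem_mul ih hx hA hAcard hs, ← add_mul, ← mul_assoc,
    Nat.mul_factorial_pred hpos]

theorem matchingCountFormula (s : Finset α) : MatchingCountFormula s := by
  induction s using Finset.strongInduction with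
  | H s ih =>
    intro A e c f hA hAcard hs
    obtain ⟨x, hx⟩ | rfl := A.eq_empty_or_nonempty.symm
    · exact card_filter_insidePoints_mul_of_mem ih hx hA hAcard hs
    obtain ⟨rfl, rfl⟩ : e = 0 ∧ c = 0 := by simp at hAcard; omega
    obtain rfl | ⟨x, hx⟩ := s.eq_empty_or_nonempty
    · obtain rfl : f = 0 := by simp at hs; omega
      simp [matchingsOn_empty, insidePoints]
    -- With `A = ∅` every pairing qualifies; count them instead as those with all of `s` inside.
    have hself := card_filter_insidePoints_mul_of_mem ih (e := f) (c := 0) (f := 0) hx subset_rfl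
      (by omega) (by omega)
    rw [filter_true_of_mem fun P hP => by rw [insidePoints_self hP, hs]; ring] at hself
    rw [filter_true_of_mem fun P _ => by simp [insidePoints]]
    simpa [mul_comm] using hself

theorem card_matchingsOn_mul {s : Finset α} {k : ℕ} (hs : #s = 2 * k) :
    #(matchingsOn s) * (k ! * 2 ^ k) = (2 * k)! := by
  have h := matchingCountFormula s (A := ∅) (e := 0) (c := 0) (f := k) (empty_subset s) rfl
    (by omega)
  rw [filter_true_of_mem fun P _ => by simp [insidePoints]] at h
  simpa using h

end Matchings

theorem card_filter_div_mem {d n : ℕ} {S : Finset ℕ} (hS : S ⊆ range n) :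
    #{x : Fin (d * n) | (x : ℕ) / d ∈ S} = d * #S := by
  rw [show d * #S = #(S ×ˢ range d) by rw [card_product, card_range, mul_comm]]
  refine card_nbij (fun x => ((x : ℕ) / d, (x : ℕ) % d)) (fun x hx => ?_) (fun x _ y _ h => ?_) ?_
  · have hd : 0 < d := Nat.pos_of_ne_zero (by rintro rfl; simpa using x.2)
    simp_all [Nat.mod_lt _ hd]
  · simp only [Prod.mk.injEq] at h
    exact Fin.ext (by rw [← Nat.div_add_mod x d, ← Nat.div_add_mod y d, h.1, h.2])
  · rintro ⟨i, j⟩ hij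
    simp only [coe_product, Set.mem_prod, mem_coe, mem_range] at hij
    have hi := mem_range.1 (hS hij.1)
    have hd : 0 < d := by omega
    refine ⟨⟨d * i + j, by nlinarith⟩, ?_, ?_⟩ <;>
      simp [Nat.mul_add_div hd, Nat.div_eq_of_lt hij.2, Nat.mod_eq_of_lt hij.2, hij.1]

theorem pairings_eq_matchingsOn_univ (d n : ℕ) : pairings d n = matchingsOn univ := by
  ext P
  simp [pairings, mem_matchingsOn]

theorem card_pairings_mul {d n k : ℕ} (hdn : d * n = 2 * k) :
    #(pairings d n) * (k ! * 2 ^ k) = (2 * k)! := by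
  rw [pairings_eq_matchingsOn_univ]
  exact card_matchingsOn_mul (by rw [card_univ, Fintype.card_fin, hdn])

theorem sum_goodSets_mul {d n s e c f : ℕ} (hds : d * s = 2 * e + c)
    (hdn : d * n = 2 * e + 2 * c + 2 * f) :
    (∑ P ∈ pairings d n, goodSets d n s e P) * (c ! * e ! * f ! * 2 ^ (e + f)) =
      n.choose s * ((2 * e + c)! * (c + 2 * f)!) := by
  have hbucket : ∀ S ∈ (range n).powersetCard s,
      #{P ∈ pairings d n | #{x : Fin (d * n) | (x : ℕ) / d ∈ S ∧ (P x : ℕ) / d ∈ S} = 2 * e} *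
        (c ! * e ! * f ! * 2 ^ (e + f)) = (2 * e + c)! * (c + 2 * f)! := by
    intro S hS
    obtain ⟨hSn, hScard⟩ := mem_powersetCard.1 hS
    rw [pairings_eq_matchingsOn_univ, ← matchingCountFormula _ (subset_univ _)
      (by rw [card_filter_div_mem hSn, hScard, hds]) (by rw [card_univ, Fintype.card_fin, hdn])]
    congr 3
    ext P
    simp [insidePoints, filter_filter]
  rw [show ∑ P ∈ pairings d n, goodSets d n s e P = ∑ S ∈ (range n).powersetCard s,
      #{P ∈ pairings d n | #{x : Fin (d * n) | (x : ℕ) / d ∈ S ∧ (P x : ℕ) / d ∈ S} = 2 * e}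
    from sum_card_bipartiteAbove_eq_sum_card_bipartiteBelow _, sum_mul, sum_const_nat hbucket,
    card_powersetCard, card_range]

theorem mpair_two_mul (k : ℕ) : Mpair (2 * k) = (2 * k)! / (k ! * 2 ^ k) := by
  simp [Mpair]

theorem div_eq_of_mul_factorial_eq {N T C e c f : ℕ}
    (hN : N * (c ! * e ! * f ! * 2 ^ (e + f)) = C * ((2 * e + c)! * (c + 2 * f)!))
    (hT : T * ((e + c + f)! * 2 ^ (e + c + f)) = (2 * (e + c + f))!) :
    (N : ℝ) / T = C * ((2 * e + c).choose (2 * e) : ℝ) * ((c + 2 * f).choose c : ℝ) *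
      (c ! : ℝ) * Mpair (2 * e) * Mpair (2 * f) / Mpair (2 * (e + c + f)) := by
  rw [Nat.cast_choose ℝ (by omega), Nat.cast_choose ℝ (by omega), Nat.add_sub_cancel_left,
    Nat.add_sub_cancel_left, mpair_two_mul, mpair_two_mul, mpair_two_mul]
  have hN' : (N : ℝ) = C * ((2 * e + c)! * (c + 2 * f)!) / (c ! * e ! * f ! * 2 ^ (e + f)) := by
    rw [eq_div_iff (by positivity)]; exact_mod_cast hN
  have hT' : (T : ℝ) = (2 * (e + c + f))! / ((e + c + f)! * 2 ^ (e + c + f)) := by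
    rw [eq_div_iff (by positivity)]; exact_mod_cast hT
  rw [hN', hT']
  field_simp
  ring

theorem statement12_general (d n : ℕ) (hpar : Even (d * n))
    (s e : ℕ) (hs : s ≤ n) (he : 2 * e ≤ d * s) (he' : d * s - 2 * e ≤ d * (n - s)) :
    (∑ P ∈ pairings d n, (goodSets d n s e P : ℝ)) / ((pairings d n).card : ℝ)
      = (n.choose s : ℝ) * ((d * s).choose (2 * e) : ℝ)
          * ((d * (n - s)).choose (d * s - 2 * e) : ℝ)
          * (Nat.factorial (d * s - 2 * e) : ℝ)
          * Mpair (2 * e) * Mpair (d * (n - s) - (d * s - 2 * e)) / Mpair (d * n) := by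
  obtain ⟨r, hr⟩ := hpar
  have hsplit : d * s + d * (n - s) = d * n := by rw [← Nat.mul_add, Nat.add_sub_cancel' hs]
  obtain ⟨c, hc⟩ : ∃ c, d * s = 2 * e + c := ⟨_, (Nat.add_sub_cancel' he).symm⟩
  obtain ⟨f, hf⟩ : ∃ f, d * (n - s) = c + 2 * f := ⟨r - e - c, by omega⟩
  have hdn : d * n = 2 * (e + c + f) := by omega
  rw [← Nat.cast_sum, div_eq_of_mul_factorial_eq (sum_goodSets_mul hc (by omega))
    (card_pairings_mul hdn), hc, hf, Nat.add_sub_cancel_left, Nat.add_sub_cancel_left, hdn]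

/-- in the pairing model with `n` buckets of `d` points (`d·n` even),
the expected number of sets of `s` buckets containing exactly `e` pairs equals
`C(n,s)·C(ds,2e)·C(d(n−s), ds−2e)·(ds−2e)!·M(2e)·M(d(n−s)−(ds−2e))/M(dn)`. -/
theorem statement12 (d n : ℕ) (hd : 1 ≤ d) (hn : 1 ≤ n) (hpar : Even (d * n))
    (s e : ℕ) (hs : s ≤ n) (he : 2 * e ≤ d * s) (he' : d * s - 2 * e ≤ d * (n - s)) :
    (∑ P ∈ pairings d n, (goodSets d n s e P : ℝ)) / ((pairings d n).card : ℝ)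
      = (n.choose s : ℝ) * ((d * s).choose (2 * e) : ℝ)
          * ((d * (n - s)).choose (d * s - 2 * e) : ℝ)
          * (Nat.factorial (d * s - 2 * e) : ℝ)
          * Mpair (2 * e) * Mpair (d * (n - s) - (d * s - 2 * e)) / Mpair (d * n) :=
  statement12_general d n hpar s e hs he he'

end
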